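/- arXiv:math/0508291 — 3 statements merged into one kernel-verified Lean document; each statement's English description precedes it below -/
import Mathlib

section
/- Let G be a finite group, C a conjugacy class of G with C = C^{-1}, and τ a nontrivial irreducible representation of G whose character χ^τ is real valued. For irreducible characters λ of G set W(λ) = |C|^{1/2} χ^λ(C)/dim(λ), and define L_τ(λ,ρ) = (dim(ρ)/(dim(λ) dim(τ))) · (1/|G|) · Σ_{g ∈ G} χ^λ(g) χ^τ(g) conj(χ^ρ(g)). Then for every irreducible character λ of G: Σ_ρ L_τ(λ,ρ) W(ρ) = (χ^τ(C)/dim(τ)) · W(λ), the sum being over all irreducible characters ρ of G. (In particular, if λ is chosen from the Plancherel measure of G and then ρ is chosen with probability L_τ(λ,ρ), the exchangeable pair (W,W') = (W(λ),W(ρ)) satisfies E(W'|W) = (χ^τ(C)/dim(τ)) W.) -/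
/-!
Write `⟨φ, ρ⟩ = |G|⁻¹ Σ_g φ(g) conj(ρ(g))`. By Maschke's theorem `λ ⊗ τ` is a sum of irreducible
representations, and by orthogonality of characters (using `conj(χ(g)) = χ(g⁻¹)`, which holds
because `g` acts by an operator of finite order, hence diagonalizable with eigenvalues on the unit
circle) the multiplicity of `ρ` in it is `⟨χ^λ χ^τ, χ^ρ⟩`. Hence
`Σ_ρ ⟨χ^λ χ^τ, χ^ρ⟩ χ^ρ(c) = χ^λ(c) χ^τ(c)`. Since `L_τ(λ,ρ) W(ρ)` equals
`|C|^{1/2} ⟨χ^λ χ^τ, χ^ρ⟩ χ^ρ(c) / (dim λ dim τ)` (the factor `dim ρ` cancels), summing over `ρ`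
gives `|C|^{1/2} χ^λ(c) χ^τ(c) / (dim λ dim τ) = (χ^τ(c) / dim τ) W(λ)`.
-/

open scoped BigOperators
open CategoryTheory

/-- `χ : G → ℂ` is an irreducible character of `G`. -/
def IsIrrChar (G : Type) [Group G] (χ : G → ℂ) : Prop :=
  ∃ V : FDRep ℂ G, Simple V ∧ χ = FDRep.character V

/-- `C` is a conjugacy class of `G`. -/
def IsConjClass {G : Type} [Group G] (C : Set G) : Prop :=
  ∃ g : G, C = {h | IsConj g h}

/-- The Markov kernel `L_τ(λ, ρ) = (dim ρ/(dim λ dim τ)) ⬝ (1/|G|) Σ_g λ(g) τ(g) conj(ρ(g))`. -/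
noncomputable def Lchain {G : Type} [Group G] [Fintype G] (τ lam ρ : G → ℂ) : ℂ :=
  ρ 1 / (lam 1 * τ 1) * ((Fintype.card G : ℂ)⁻¹ * ∑ g : G, lam g * τ g * (starRingEnd ℂ) (ρ g))

/-- The character-ratio statistic `W(χ) = |C|^{1/2} χ(C)/dim χ`, evaluated at `c ∈ C`. -/
noncomputable def Wstat {G : Type} [Group G] (C : Set G) (c : G) (χ : G → ℂ) : ℂ :=
  (Real.sqrt (Set.ncard C) : ℂ) * χ c / χ 1

open Module Polynomial MonoidalCategory

universe u

theorem Complex.conj_eq_pow_pred {μ : ℂ} {n : ℕ} (hn : n ≠ 0) (hμ : μ ^ n = 1) :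
    starRingEnd ℂ μ = μ ^ (n - 1) := by
  rw [← inv_eq_conj (norm_eq_one_of_pow_eq_one hμ hn)]
  refine (eq_inv_of_mul_eq_one_left ?_).symm
  rw [← pow_succ, Nat.sub_add_cancel (Nat.pos_of_ne_zero hn), hμ]

theorem LinearMap.trace_eq_trace_restrict_add_trace_restrict {K V : Type*} [Field K]
    [AddCommGroup V] [Module K V] [FiniteDimensional K V] {p q : Submodule K V}
    (h : IsCompl p q) (f : V →ₗ[K] V) (hp : Set.MapsTo f p p) (hq : Set.MapsTo f q q) :
    trace K V f = trace K p (f.restrict hp) + trace K q (f.restrict hq) := by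
  let N : Bool → Submodule K V := fun b => cond b p q
  have hN : DirectSum.IsInternal N :=
    (DirectSum.isInternal_submodule_iff_isCompl N (i := true) (j := false) (by decide)
      (by ext b; cases b <;> simp)).mpr h
  rw [trace_eq_sum_trace_restrict hN (f := f) (by rintro (_ | _) <;> assumption),
    Fintype.sum_bool]
  rfl

namespace Module.End

variable {K V : Type*} [Field K] [AddCommGroup V] [Module K V]

theorem isSemisimple_of_pow_eq_one [CharZero K] {f : End K V} {n : ℕ} (hn : n ≠ 0)
    (hf : f ^ n = 1) : f.IsSemisimple :=
  isSemisimple_of_squarefree_aeval_eq_zero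
    (separable_X_pow_sub_C 1 (by exact_mod_cast hn) one_ne_zero).squarefree
    (by simp [hf])

theorem IsSemisimple.trace_pow_eq_sum [FiniteDimensional K V] [IsAlgClosed K] {f : End K V}
    (hf : f.IsSemisimple) (s : Finset K) (hs : ∀ μ, f.HasEigenvalue μ → μ ∈ s) (m : ℕ) :
    LinearMap.trace K V (f ^ m) = ∑ μ ∈ s, μ ^ m * finrank K (f.eigenspace μ) := by
  classical
  have hint : DirectSum.IsInternal f.eigenspace :=
    DirectSum.isInternal_submodule_of_iSupIndep_of_iSup_eq_top f.eigenspaces_iSupIndep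
      hf.iSup_eigenspace_eq_top
  have hfin : {μ | f.eigenspace μ ≠ ⊥}.Finite :=
    WellFoundedGT.finite_ne_bot_of_iSupIndep f.eigenspaces_iSupIndep
  have hpow : ∀ μ, ∀ x ∈ f.eigenspace μ, (f ^ m) x = μ ^ m • x := fun μ x hx => by
    rcases eq_or_ne x 0 with rfl | hx0
    · simp
    · exact HasEigenvector.pow_apply ⟨hx, hx0⟩ m
  have hmaps : ∀ μ, Set.MapsTo (f ^ m) (f.eigenspace μ) (f.eigenspace μ) := fun μ x hx => by
    rw [hpow μ x hx]
    exact Submodule.smul_mem _ _ hx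
  have hrestrict : ∀ μ, (f ^ m).restrict (hmaps μ) = μ ^ m • LinearMap.id := fun μ => by
    ext x
    exact hpow μ x x.2
  rw [LinearMap.trace_eq_sum_trace_restrict' hint hfin hmaps]
  simp only [hrestrict, map_smul, LinearMap.trace_id, smul_eq_mul]
  refine Finset.sum_subset (fun μ hμ => hs μ (hasEigenvalue_iff.mpr (by simpa using hμ))) ?_
  intro μ _ hμ
  rw [show f.eigenspace μ = ⊥ by simpa using hμ, finrank_bot, Nat.cast_zero, mul_zero]

theorem HasEigenvalue.pow_eq_one {f : End K V} {μ : K} (hμ : f.HasEigenvalue μ) {n : ℕ}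
    (hf : f ^ n = 1) : μ ^ n = 1 := by
  obtain ⟨v, hv⟩ := hμ.exists_hasEigenvector
  have h := hv.pow_apply n
  rw [hf, one_apply] at h
  exact smul_left_injective K hv.2 (h.symm.trans (one_smul K v).symm)

end Module.End

theorem Module.End.trace_pow_pred_eq_conj_trace {V : Type*} [AddCommGroup V] [Module ℂ V]
    [FiniteDimensional ℂ V] {f : End ℂ V} {n : ℕ} (hn : n ≠ 0) (hf : f ^ n = 1) :
    LinearMap.trace ℂ V (f ^ (n - 1)) = starRingEnd ℂ (LinearMap.trace ℂ V f) := by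
  have hss := isSemisimple_of_pow_eq_one hn hf
  have hs : ∀ μ, f.HasEigenvalue μ → μ ∈ (nthRoots n (1 : ℂ)).toFinset := fun μ hμ => by
    simpa [mem_nthRoots (Nat.pos_of_ne_zero hn)] using hμ.pow_eq_one hf
  have htrace := hss.trace_pow_eq_sum _ hs 1
  rw [pow_one] at htrace
  rw [htrace, hss.trace_pow_eq_sum _ hs, map_sum]
  refine Finset.sum_congr rfl fun μ hμ => ?_
  rw [pow_one, map_mul, map_natCast, Complex.conj_eq_pow_pred hn]
  simpa [mem_nthRoots (Nat.pos_of_ne_zero hn)] using hμ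

namespace Subrepresentation

variable {k G V : Type*} [Field k] [Monoid G] [AddCommGroup V] [Module k V]
  {ρ : Representation k G V}

theorem isCompl_toSubmodule {p q : Subrepresentation ρ} (h : IsCompl p q) :
    IsCompl p.toSubmodule q.toSubmodule :=
  ⟨disjoint_iff.mpr (by rw [← toSubmodule_inf, h.inf_eq_bot]; rfl),
    codisjoint_iff.mpr (by rw [← toSubmodule_sup, h.sup_eq_top]; rfl)⟩

theorem character_add_character [FiniteDimensional k V] {p q : Subrepresentation ρ}
    (h : IsCompl p q) :
    p.toRepresentation.character + q.toRepresentation.character = ρ.character := by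
  ext g
  exact (LinearMap.trace_eq_trace_restrict_add_trace_restrict (isCompl_toSubmodule h) (ρ g)
    (p.apply_mem_toSubmodule g) (q.apply_mem_toSubmodule g)).symm

end Subrepresentation

namespace Representation

theorem exists_subrepresentation_ne_bot_ne_top {k G V : Type*} [Field k] [Monoid G]
    [AddCommGroup V] [Module k V] [Nontrivial V] {ρ : Representation k G V}
    (h : ¬ IsIrreducible ρ) : ∃ p : Subrepresentation ρ, p ≠ ⊥ ∧ p ≠ ⊤ := by
  by_contra! hp
  have : Nontrivial (Subrepresentation ρ) :=
    ⟨⊥, ⊤, fun h => bot_ne_top (congrArg Subrepresentation.toSubmodule h :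
      (⊥ : Submodule k V) = ⊤)⟩
  exact h { eq_bot_or_eq_top := fun p => or_iff_not_imp_left.mpr (hp p) }

variable {k G V : Type u} [Field k] [IsAlgClosed k] [CharZero k] [Group G] [Fintype G]
  [AddCommGroup V] [Module k V] [FiniteDimensional k V]

theorem simple_of_isIrreducible (ρ : Representation k G V) [IsIrreducible ρ] :
    Simple (FDRep.of ρ) := by
  have := invertibleOfNonzero (NeZero.ne (Nat.card G : k))
  rw [FDRep.simple_iff_char_is_norm_one]
  have h := char_orthonormal ρ ρ
  rw [if_pos ⟨Equiv.refl ρ⟩] at h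
  exact ((inv_mul_eq_one₀ (NeZero.ne _)).mp h).symm

theorem exists_character_eq_sum_simple (ρ : Representation k G V) :
    ∃ S : List (FDRep k G), (∀ W ∈ S, Simple W) ∧ ρ.character = (S.map FDRep.character).sum := by
  induction hn : finrank k V using Nat.strong_induction_on generalizing V with
  | _ n ih =>
  rcases subsingleton_or_nontrivial V with hV | hV
  · refine ⟨[], by simp, ?_⟩
    ext g
    simp [character, Subsingleton.elim (ρ g) 0]
  by_cases hirr : IsIrreducible ρ
  · exact ⟨[FDRep.of ρ], by simpa using simple_of_isIrreducible ρ, by simp; rfl⟩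
  obtain ⟨p, hp_bot, hp_top⟩ := exists_subrepresentation_ne_bot_ne_top hirr
  obtain ⟨q, hpq⟩ := exists_isCompl p
  have hq_top : q ≠ ⊤ := fun h => hp_bot (disjoint_top.mp (h ▸ hpq.disjoint))
  have hlt : ∀ r : Subrepresentation ρ, r ≠ ⊤ → finrank k r.toSubmodule < n := fun r hr =>
    hn ▸ Submodule.finrank_lt fun h => hr (Subrepresentation.toSubmodule_injective h)
  obtain ⟨Sp, hSp, hp⟩ := ih _ (hlt p hp_top) p.toRepresentation rfl
  obtain ⟨Sq, hSq, hq⟩ := ih _ (hlt q hq_top) q.toRepresentation rfl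
  refine ⟨Sp ++ Sq, fun W hW => (List.mem_append.mp hW).elim (hSp W) (hSq W), ?_⟩
  rw [← Subrepresentation.character_add_character hpq, hp, hq, List.map_append, List.sum_append]

end Representation

namespace FDRep

section

variable {k G : Type u} [Field k] [IsAlgClosed k] [CharZero k] [Group G] [Fintype G]

theorem char_one_ne_zero (V : FDRep k G) [Simple V] : V.character 1 ≠ 0 := by
  intro h
  have : Subsingleton V := by
    rw [char_one] at h
    exact finrank_zero_iff.mp (by exact_mod_cast h)
  have hnorm := (simple_iff_char_is_norm_one V).mp inferInstance
  simp [character, Subsingleton.elim (V.ρ _) 0, eq_comm] at hnorm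

open scoped Classical in
theorem char_orthonormal_eq_ite_char_eq (V W : FDRep k G) [Simple V] [Simple W] :
    (Nat.card G : k)⁻¹ * ∑ g : G, V.character g * W.character g⁻¹ =
      if V.character = W.character then 1 else 0 := by
  have := invertibleOfNonzero (NeZero.ne (Nat.card G : k))
  have hself := char_orthonormal W W
  rw [if_pos ⟨Iso.refl W⟩] at hself
  rw [char_orthonormal]
  by_cases hiso : Nonempty (V ≅ W)
  · rw [if_pos hiso, if_pos (char_iso hiso.some)]
  · rw [if_neg hiso, if_neg]
    intro hchar
    have h := char_orthonormal V W
    rw [if_neg hiso, hchar, hself] at h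
    exact one_ne_zero h

end

theorem char_inv_eq_conj {G : Type u} [Group G] [Finite G] (V : FDRep ℂ G) (g : G) :
    V.character g⁻¹ = starRingEnd ℂ (V.character g) := by
  have hn : Nat.card G ≠ 0 := Nat.card_pos.ne'
  have hinv : g⁻¹ = g ^ (Nat.card G - 1) := by
    refine (eq_inv_of_mul_eq_one_left ?_).symm
    rw [← pow_succ, Nat.sub_add_cancel (Nat.pos_of_ne_zero hn), pow_card_eq_one']
  rw [hinv, character, map_pow]
  exact End.trace_pow_pred_eq_conj_trace hn (by rw [← map_pow, pow_card_eq_one', map_one])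

end FDRep

namespace IsIrrChar

variable {G : Type} [Group G] [Fintype G]

theorem apply_one_ne_zero {χ : G → ℂ} (hχ : IsIrrChar G χ) : χ 1 ≠ 0 := by
  obtain ⟨V, hV, rfl⟩ := hχ
  exact FDRep.char_one_ne_zero V

open scoped Classical in
theorem card_inv_mul_sum_mul_inv {χ ψ : G → ℂ} (hχ : IsIrrChar G χ) (hψ : IsIrrChar G ψ) :
    (Nat.card G : ℂ)⁻¹ * ∑ g : G, χ g * ψ g⁻¹ = if χ = ψ then 1 else 0 := by
  obtain ⟨V, hV, rfl⟩ := hχ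
  obtain ⟨W, hW, rfl⟩ := hψ
  exact FDRep.char_orthonormal_eq_ite_char_eq V W

open scoped Classical in
theorem card_inv_mul_sum_mul_conj {χ ψ : G → ℂ} (hχ : IsIrrChar G χ) (hψ : IsIrrChar G ψ) :
    (Fintype.card G : ℂ)⁻¹ * ∑ g : G, χ g * starRingEnd ℂ (ψ g) = if χ = ψ then 1 else 0 := by
  obtain ⟨W, hW, rfl⟩ := hψ
  simp_rw [← FDRep.char_inv_eq_conj, ← Nat.card_eq_fintype_card]
  exact card_inv_mul_sum_mul_inv hχ ⟨W, hW, rfl⟩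

theorem finite_setOf : {χ : G → ℂ | IsIrrChar G χ}.Finite := by
  let f : {χ // IsIrrChar G χ} → Dual ℂ (G → ℂ) := fun ψ =>
    ∑ g, ((Nat.card G : ℂ)⁻¹ * ψ.1 g⁻¹) • LinearMap.proj g
  have hf : ∀ χ ψ : {χ // IsIrrChar G χ}, f ψ χ = if χ.1 = ψ.1 then 1 else 0 := fun χ ψ => by
    rw [← card_inv_mul_sum_mul_inv χ.2 ψ.2, Finset.mul_sum]
    simp [f, mul_comm, mul_left_comm]
  have hli : LinearIndependent ℂ (fun χ : {χ // IsIrrChar G χ} => χ.1) :=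
    .of_pairwise_dual_eq_zero_one _ f (fun ψ χ hne => by
      dsimp only
      rw [hf, if_neg fun h => hne (Subtype.ext h).symm]) (fun χ => by rw [hf, if_pos rfl])
  exact Set.finite_coe_iff.mp hli.finite

end IsIrrChar

theorem FDRep.char_eq_finsum_isIrrChar {G : Type} [Group G] [Fintype G] (V : FDRep ℂ G) (x : G) :
    V.character x = ∑ᶠ χ ∈ {χ : G → ℂ | IsIrrChar G χ},
      (Fintype.card G : ℂ)⁻¹ * (∑ g, V.character g * starRingEnd ℂ (χ g)) * χ x := by
  classical
  have hfin := IsIrrChar.finite_setOf (G := G)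
  rw [← hfin.coe_toFinset, finsum_mem_coe_finset]
  obtain ⟨S, hS, hV⟩ := Representation.exists_character_eq_sum_simple V.ρ
  rw [show V.character = (S.map FDRep.character).sum from hV]
  refine List.sum_induction (fun φ : G → ℂ => φ x = ∑ χ ∈ hfin.toFinset,
    (Fintype.card G : ℂ)⁻¹ * (∑ g, φ g * starRingEnd ℂ (χ g)) * χ x) ?_ ?_ ?_
  · intro φ ψ hφ hψ
    simp only [Pi.add_apply, add_mul, Finset.sum_add_distrib, mul_add, hφ, hψ]
  · simp
  · intro φ hφ
    obtain ⟨U, hU, rfl⟩ := List.mem_map.mp hφ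
    have hUirr : IsIrrChar G U.character := ⟨U, hS U hU, rfl⟩
    rw [Finset.sum_congr rfl fun χ hχ => by
      rw [IsIrrChar.card_inv_mul_sum_mul_conj hUirr (hfin.mem_toFinset.mp hχ)]]
    simp [hfin.mem_toFinset.mpr hUirr]

theorem stmt4_general {G : Type} [Group G] [Fintype G] (C : Set G) (c : G)
    (τ : G → ℂ) (hτ : IsIrrChar G τ)
    (lam : G → ℂ) (hlam : IsIrrChar G lam) :
    (∑ᶠ ρ ∈ {ρ : G → ℂ | IsIrrChar G ρ}, Lchain τ lam ρ * Wstat C c ρ) =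
      τ c / τ 1 * Wstat C c lam := by
  obtain ⟨Vl, -, rfl⟩ := hlam
  obtain ⟨Vt, -, rfl⟩ := hτ
  have hexp := FDRep.char_eq_finsum_isIrrChar (Vl ⊗ Vt) c
  simp only [FDRep.char_tensor, Pi.mul_apply] at hexp
  have hterm : ∀ ρ ∈ {ρ : G → ℂ | IsIrrChar G ρ},
      Lchain Vt.character Vl.character ρ * Wstat C c ρ =
        (Real.sqrt (Set.ncard C) : ℂ) / (Vl.character 1 * Vt.character 1) *
          ((Fintype.card G : ℂ)⁻¹ * (∑ g, Vl.character g * Vt.character g * starRingEnd ℂ (ρ g)) *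
            ρ c) := fun ρ hρ => by
    have := hρ.apply_one_ne_zero
    unfold Lchain Wstat
    field_simp
  rw [finsum_mem_congr rfl hterm, ← mul_finsum_mem, ← hexp, Wstat]
  ring

/-- **Lemma (steinsat)**: `Σ_ρ L_τ(λ,ρ) W(ρ) = (χ^τ(C)/dim τ) W(λ)`, i.e. the exchangeable
pair built from the Plancherel measure and the chain `L_τ` satisfies
`E(W'|W) = (χ^τ(C)/dim τ) W`. -/
theorem stmt4 {G : Type} [Group G] [Fintype G] (C : Set G) (hC : IsConjClass C)
    (hCinv : C⁻¹ = C) (c : G) (hc : c ∈ C)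
    (τ : G → ℂ) (hτ : IsIrrChar G τ) (hτnt : τ ≠ fun _ => 1) (hτre : ∀ g : G, (τ g).im = 0)
    (lam : G → ℂ) (hlam : IsIrrChar G lam) :
    (∑ᶠ ρ ∈ {ρ : G → ℂ | IsIrrChar G ρ}, Lchain τ lam ρ * Wstat C c ρ) =
      τ c / τ 1 * Wstat C c lam :=
  stmt4_general C c τ hτ lam hlam
end

section
/- Let (G,K) be a Gelfand pair of finite groups, with 1_K^G = ⊕_{r=0}^s V_r the multiplicity-free decomposition (V_0 trivial), d_r = dim V_r, spherical functions ω_r(x) = (1/|K|) Σ_{k∈K} χ^{(r)}(x^{-1}k), and double cosets K_0, ..., K_s of K in G with representatives g_0, ..., g_s (g_0 the identity). Fix a double coset K_u and for m ≥ 1 and 0 ≤ r ≤ s let p_m(K_r) = #{(x_1, ..., x_m) ∈ K_u^m : x_1 ⋯ x_m ∈ K_r}/|K_u|^m, the probability that a product of m independent uniform elements of K_u lies in K_r. Then p_m(K_r) = |K_r| · Σ_{i=0}^s (d_i/|G|) ω_i(g_u)^m conj(ω_i(g_r)). -/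
open scoped BigOperators Classical
open CategoryTheory

/-- The data of a Gelfand pair `(G, K)`: the induced representation `1_K^G` decomposes
multiplicity-freely as `⊕_{r=0}^s V_r` with `V_0` trivial, `χ r` and `d r` are the character
and dimension of `V_r`, and `g r` are representatives of the `s+1` double cosets of `K`
in `G`, with `g 0 = 1`. -/
structure GelfandPairData (G : Type) [Group G] [Fintype G] where
  /-- the subgroup `K` -/
  K : Subgroup G
  /-- `s + 1` is the number of irreducible constituents of `1_K^G` -/
  s : ℕ
  /-- the irreducible characters of the constituents `V_r` -/
  χ : Fin (s + 1) → G → ℂ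
  /-- the dimensions `d_r = dim V_r` -/
  d : Fin (s + 1) → ℕ
  /-- double coset representatives `g_0, …, g_s` -/
  g : Fin (s + 1) → G
  irr : ∀ r, IsIrrChar G (χ r)
  dim_eq : ∀ r, χ r 1 = (d r : ℂ)
  triv : χ 0 = fun _ => 1
  inj : Function.Injective χ
  /-- each `V_r` occurs in `1_K^G` with multiplicity exactly one -/
  mult_one : ∀ r, (Nat.card K : ℂ)⁻¹ * (∑ᶠ k ∈ (K : Set G), χ r k) = 1
  /-- multiplicity-freeness/completeness: every irreducible character of `G` either does not
  occur in `1_K^G` or is one of the `χ r` -/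
  gelfand : ∀ ψ : G → ℂ, IsIrrChar G ψ →
    (∑ᶠ k ∈ (K : Set G), ψ k) = 0 ∨ ∃ r, ψ = χ r
  g_zero : g 0 = 1
  /-- the double cosets `K g_r K` are pairwise distinct -/
  coset_disjoint : ∀ r t : Fin (s + 1), r ≠ t →
    Disjoint {x | ∃ k₁ ∈ K, ∃ k₂ ∈ K, x = k₁ * g r * k₂}
      {x | ∃ k₁ ∈ K, ∃ k₂ ∈ K, x = k₁ * g t * k₂}
  /-- the double cosets `K g_r K` cover `G` -/
  coset_cover : ∀ x : G, ∃ r : Fin (s + 1), ∃ k₁ ∈ K, ∃ k₂ ∈ K, x = k₁ * g r * k₂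

namespace GelfandPairData

variable {G : Type} [Group G] [Fintype G]

/-- The double coset `K_r = K g_r K`. -/
def DC (D : GelfandPairData G) (r : Fin (D.s + 1)) : Set G :=
  {x | ∃ k₁ ∈ D.K, ∃ k₂ ∈ D.K, x = k₁ * D.g r * k₂}

/-- The spherical function `ω_r(x) = (1/|K|) Σ_{k ∈ K} χ^{(r)}(x⁻¹ k)`. -/
noncomputable def ω (D : GelfandPairData G) (r : Fin (D.s + 1)) (x : G) : ℂ :=
  (Nat.card D.K : ℂ)⁻¹ * ∑ᶠ k ∈ (D.K : Set G), D.χ r (x⁻¹ * k)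

end GelfandPairData

/-!
Let `ρ_i` be the constituent `V_i` and `P_i = |K|⁻¹ Σ_{k ∈ K} ρ_i(k)` (`proj i`). Multiplicity one
says `tr P_i = 1`, so `P_i` is a rank-one idempotent and `P_i X P_i = tr (X P_i) • P_i`. The matrix
coefficient `sph i x = tr (ρ_i(x) P_i) = conj (ω_i x)` is therefore `K`-biinvariant, and
`Σ_{y ∈ K_u} ρ_i(y) = |K_u| sph i g_u • P_i`; summing `sph i` over products of `m` elements of
`K_u` thus gives `(|K_u| sph i g_u)^m`. Schur orthogonality makes the `sph i` orthogonal, and since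
there are as many of them as double cosets, the square matrix `(sph i g_t)` is invertible: the
indicator of `K_r` is `|K_r| Σ_i (d_i/|G|) ω_i(g_r) sph i`. Summing it over `K_u^m` counts the
tuples; the count is real, which turns `sph i g_u = conj (ω_i g_u)` into the stated form.
-/
open LinearMap Module ComplexConjugate

theorem LinearMap.trace_restrict_eq_of_forall_eq_smul {K V : Type*} [Field K] [AddCommGroup V]
    [Module K V] [FiniteDimensional K V] {f : Module.End K V} {p : Submodule K V} (c : K)
    (hf : ∀ v ∈ p, f v = c • v) (hp : Set.MapsTo f p p) :
    trace K p (f.restrict hp) = c * finrank K p := by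
  have : f.restrict hp = c • LinearMap.id := by
    ext ⟨v, hv⟩
    exact hf v hv
  rw [this, map_smul, trace_id, smul_eq_mul]

theorem Module.End.trace_eq_conj_trace_of_pow_eq_one {V : Type*} [AddCommGroup V] [Module ℂ V]
    [FiniteDimensional ℂ V] {f g : Module.End ℂ V} {n : ℕ} (hn : n ≠ 0) (hf : f ^ n = 1)
    (hgf : g * f = 1) : trace ℂ V g = conj (trace ℂ V f) := by
  have hss : f.IsSemisimple := isSemisimple_of_squarefree_aeval_eq_zero
    (Polynomial.separable_X_pow_sub_C 1 (by exact_mod_cast hn) one_ne_zero).squarefree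
    (by simp [hf])
  have hint : DirectSum.IsInternal f.eigenspace :=
    DirectSum.isInternal_submodule_of_iSupIndep_of_iSup_eq_top f.eigenspaces_iSupIndep
      hss.iSup_eigenspace_eq_top
  have hfin : {μ | f.eigenspace μ ≠ ⊥}.Finite :=
    WellFoundedGT.finite_ne_bot_of_iSupIndep f.eigenspaces_iSupIndep
  have hfμ : ∀ μ, ∀ v ∈ f.eigenspace μ, f v = μ • v := fun μ v hv => mem_eigenspace_iff.mp hv
  -- an eigenvalue `μ` satisfies `μ ^ n = 1`, so `g = f⁻¹` acts on its eigenspace by `μ⁻¹ = conj μ`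
  have hgμ : ∀ μ, ∀ v ∈ f.eigenspace μ, g v = conj μ • v := by
    intro μ v hv
    rcases eq_or_ne v 0 with rfl | hv0
    · simp
    have hpow : μ ^ n = 1 := by
      refine smul_left_injective ℂ hv0 ?_
      simp only [← (show f.HasEigenvector μ v from ⟨hv, hv0⟩).pow_apply, hf, one_apply, one_smul]
    have hμ0 : μ ≠ 0 := by rintro rfl; simp [zero_pow hn] at hpow
    have hgv : μ • g v = v := by
      rw [← map_smul, ← hfμ μ v hv, ← Module.End.mul_apply, hgf, Module.End.one_apply]
    rw [← RCLike.inv_eq_conj (Complex.norm_eq_one_of_pow_eq_one hpow hn), eq_inv_smul_iff₀ hμ0,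
      hgv]
  have hmaps : ∀ h : Module.End ℂ V, ∀ c : ℂ → ℂ, (∀ μ, ∀ v ∈ f.eigenspace μ, h v = c μ • v) →
      ∀ μ, Set.MapsTo h (f.eigenspace μ) (f.eigenspace μ) := fun h c hc μ v hv => by
    rw [SetLike.mem_coe, hc μ v hv]; exact Submodule.smul_mem _ _ hv
  rw [trace_eq_sum_trace_restrict' hint hfin (hmaps g _ hgμ),
    trace_eq_sum_trace_restrict' hint hfin (hmaps f _ hfμ), map_sum]
  refine Finset.sum_congr rfl fun μ _ => ?_
  rw [trace_restrict_eq_of_forall_eq_smul _ (hgμ μ), trace_restrict_eq_of_forall_eq_smul _ (hfμ μ),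
    map_mul, map_natCast]

theorem LinearMap.trace_llcomp_comp_lcomp {M N : Type*} [AddCommGroup M] [Module ℂ M]
    [FiniteDimensional ℂ M] [AddCommGroup N] [Module ℂ N] [FiniteDimensional ℂ N]
    (A : Module.End ℂ M) (B : Module.End ℂ N) :
    trace ℂ (N →ₗ[ℂ] M) (llcomp ℂ N M M A ∘ₗ lcomp ℂ M B) = trace ℂ M A * trace ℂ N B := by
  have : llcomp ℂ N M M A ∘ₗ lcomp ℂ M B =
      (dualTensorHomEquiv ℂ N M).conj (TensorProduct.map (Dual.transpose B) A) := by
    rw [LinearEquiv.conj_apply, LinearEquiv.eq_comp_toLinearMap_symm]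
    apply TensorProduct.ext'
    intro f m
    ext n
    simp [dualTensorHomEquiv, Dual.transpose_apply]
  rw [this, trace_conj', trace_tensorProduct', trace_transpose', mul_comm]

theorem IsIdempotentElem.mul_mul_eq_trace_smul {K V : Type*} [Field K] [CharZero K]
    [AddCommGroup V] [Module K V] [FiniteDimensional K V] {E : Module.End K V}
    (hE : IsIdempotentElem E) (htr : trace K V E = 1) (S : Module.End K V) :
    E * S * E = trace K V (S * E) • E := by
  have hproj : LinearMap.IsProj (range E) E :=
    ⟨fun x => mem_range_self E x, by rintro _ ⟨y, rfl⟩; exact congr($hE y)⟩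
  have hrank : finrank K (range E) = 1 := by exact_mod_cast hproj.trace.symm.trans htr
  obtain ⟨v, -, hv⟩ := finrank_eq_one_iff'.mp hrank
  obtain ⟨c, hc⟩ := hv ⟨E (S v), mem_range_self E _⟩
  have hESE : E * S * E = c • E := by
    ext x
    obtain ⟨a, ha⟩ := hv ⟨E x, mem_range_self E x⟩
    have hx : E x = a • (v : V) := congr(Subtype.val $ha).symm
    have hSv : E (S v) = c • (v : V) := congr(Subtype.val $hc).symm
    simp only [Module.End.mul_apply, LinearMap.smul_apply, hx, map_smul, hSv, smul_comm a c]
  have : trace K V (E * S * E) = trace K V (S * E) := by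
    rw [mul_assoc, trace_mul_comm, mul_assoc, hE.eq]
  rw [hESE, ← this, hESE, map_smul, htr, smul_eq_mul, mul_one]

theorem sum_list_prod_ofFn {R ι : Type*} [Semiring R] [Fintype ι] (f : ι → R) (m : ℕ) :
    ∑ x : Fin m → ι, (List.ofFn fun j => f (x j)).prod = (∑ i, f i) ^ m := by
  induction m with
  | zero => simp
  | succ m ih =>
    rw [← (Fin.consEquiv fun _ => ι).sum_comp, Fintype.sum_prod_type, pow_succ', ← ih,
      Finset.sum_mul]
    simp [List.ofFn_succ, Finset.mul_sum]

theorem sum_mul_eq_ite_of_sum_mul_eq_ite {ι R : Type*} [Fintype ι] [DecidableEq ι] [CommRing R]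
    {a b : ι → ι → R} (h : ∀ i j, ∑ t, a i t * b j t = if i = j then 1 else 0) (t r : ι) :
    ∑ i, b i t * a i r = if t = r then 1 else 0 := by
  have hab : Matrix.of a * (Matrix.of b).transpose = 1 := by
    ext i j
    simp [Matrix.mul_apply, h, Matrix.one_apply]
  simpa [Matrix.mul_apply, Matrix.one_apply] using congr($(mul_eq_one_comm.mp hab) t r)

namespace FDRep

theorem char_inv {G : Type} [Group G] [Finite G] (V : FDRep ℂ G) (g : G) :
    V.character g⁻¹ = conj (V.character g) :=
  Module.End.trace_eq_conj_trace_of_pow_eq_one (orderOf_pos g).ne'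
    (by rw [← map_pow, pow_orderOf_eq_one, map_one]) (by rw [← map_mul, inv_mul_cancel, map_one])

theorem finrank_pos_of_simple {G : Type} [Group G] (X : FDRep ℂ G) [Simple X] :
    0 < finrank ℂ X := by
  refine Module.finrank_pos_iff_exists_ne_zero.mpr ?_
  by_contra! h
  refine id_nonzero X (Action.hom_ext _ _ ?_)
  ext v
  exact h _

variable {G : Type} [Group G] [Fintype G]

theorem sum_rho_comp_comp_rho_inv_mem_invariants (X Y : FDRep ℂ G) (ψ : Y →ₗ[ℂ] X) :
    ∑ x : G, X.ρ x ∘ₗ ψ ∘ₗ Y.ρ x⁻¹ ∈ (Representation.linHom Y.ρ X.ρ).invariants := by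
  intro g
  ext v
  simp only [Representation.linHom_apply, LinearMap.comp_apply, coe_sum, Finset.sum_apply, map_sum]
  refine Fintype.sum_equiv (Equiv.mulLeft g) _ _ fun x => ?_
  simp [Module.End.mul_apply]

theorem sum_rho_comp_comp_rho_inv_eq_zero (X Y : FDRep ℂ G) [Simple X] [Simple Y]
    (h : ¬ Nonempty (Y ≅ X)) (ψ : Y →ₗ[ℂ] X) : ∑ x : G, X.ρ x ∘ₗ ψ ∘ₗ Y.ρ x⁻¹ = 0 := by
  have hbot : (Representation.linHom Y.ρ X.ρ).invariants = ⊥ := by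
    rw [← Submodule.finrank_eq_zero,
      (Representation.linHom.invariantsEquivFDRepHom Y X).finrank_eq,
      finrank_hom_simple_simple, if_neg h]
  simpa [hbot] using sum_rho_comp_comp_rho_inv_mem_invariants X Y ψ

theorem sum_rho_comp_comp_rho_inv_eq_smul_id (X : FDRep ℂ G) [Simple X] (ψ : X →ₗ[ℂ] X) :
    ∑ x : G, X.ρ x ∘ₗ ψ ∘ₗ X.ρ x⁻¹ =
      ((Fintype.card G / finrank ℂ X : ℂ) * trace ℂ X ψ) • LinearMap.id := by
  have hone : finrank ℂ (Representation.linHom X.ρ X.ρ).invariants = 1 := by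
    rw [(Representation.linHom.invariantsEquivFDRepHom X X).finrank_eq,
      finrank_hom_simple_simple, if_pos ⟨Iso.refl X⟩]
  have hid : LinearMap.id ∈ (Representation.linHom X.ρ X.ρ).invariants := fun g => by
    ext v
    simp [Representation.linHom_apply]
  have hid0 : (⟨_, hid⟩ : (Representation.linHom X.ρ X.ρ).invariants) ≠ 0 := fun h => by
    obtain ⟨v, hv⟩ := Module.finrank_pos_iff_exists_ne_zero.mp (finrank_pos_of_simple X)
    exact hv congr($(congrArg Subtype.val h) v)
  obtain ⟨c, hc⟩ := (finrank_eq_one_iff_of_nonzero' _ hid0).mp hone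
    ⟨_, sum_rho_comp_comp_rho_inv_mem_invariants X X ψ⟩
  replace hc : ∑ x : G, X.ρ x ∘ₗ ψ ∘ₗ X.ρ x⁻¹ = c • LinearMap.id := by
    simpa using congrArg Subtype.val hc.symm
  have htrace : c * finrank ℂ X = Fintype.card G * trace ℂ X ψ := by
    have := congrArg (trace ℂ X) hc
    have hconj : ∀ x, trace ℂ X (X.ρ x ∘ₗ ψ ∘ₗ X.ρ x⁻¹) = trace ℂ X ψ := fun x => by
      rw [trace_comp_comm', comp_assoc, ← Module.End.mul_eq_comp (X.ρ x⁻¹), ← map_mul,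
        inv_mul_cancel, map_one, Module.End.one_eq_id, comp_id]
    simpa [hconj] using this.symm
  have hd : (finrank ℂ X : ℂ) ≠ 0 := by exact_mod_cast (finrank_pos_of_simple X).ne'
  rw [hc, div_mul_eq_mul_div, ← htrace, mul_div_cancel_right₀ _ hd]

theorem sum_trace_rho_mul_mul_trace_rho_inv_mul_eq_trace (X Y : FDRep ℂ G) (A : Module.End ℂ X)
    (B : Module.End ℂ Y) :
    ∑ x : G, trace ℂ X (X.ρ x * A) * trace ℂ Y (Y.ρ x⁻¹ * B) =
      trace ℂ (Y →ₗ[ℂ] X) (∑ x : G, llcomp ℂ Y X X (X.ρ x * A) ∘ₗ lcomp ℂ X (Y.ρ x⁻¹ * B)) := by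
  simp only [map_sum, trace_llcomp_comp_lcomp]

theorem sum_trace_rho_mul_mul_trace_rho_inv_mul_eq_zero (X Y : FDRep ℂ G) [Simple X] [Simple Y]
    (h : ¬ Nonempty (Y ≅ X)) (A : Module.End ℂ X) (B : Module.End ℂ Y) :
    ∑ x : G, trace ℂ X (X.ρ x * A) * trace ℂ Y (Y.ρ x⁻¹ * B) = 0 := by
  rw [sum_trace_rho_mul_mul_trace_rho_inv_mul_eq_trace]
  convert map_zero (trace ℂ (Y →ₗ[ℂ] X))
  ext φ v
  simpa using congr($(sum_rho_comp_comp_rho_inv_eq_zero X Y h (A ∘ₗ φ)) (B v))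

theorem sum_trace_rho_mul_mul_trace_rho_inv_mul_self (X : FDRep ℂ G) [Simple X]
    (A B : Module.End ℂ X) :
    ∑ x : G, trace ℂ X (X.ρ x * A) * trace ℂ X (X.ρ x⁻¹ * B) =
      Fintype.card G / finrank ℂ X * trace ℂ X (A * B) := by
  rw [sum_trace_rho_mul_mul_trace_rho_inv_mul_eq_trace]
  have : ∑ x : G, llcomp ℂ X X X (X.ρ x * A) ∘ₗ lcomp ℂ X (X.ρ x⁻¹ * B) =
      (Fintype.card G / finrank ℂ X : ℂ) • (trace ℂ X ∘ₗ llcomp ℂ X X X A).smulRight B := by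
    ext φ v
    simpa [smul_smul, llcomp_apply', Module.End.mul_apply] using
      congr($(sum_rho_comp_comp_rho_inv_eq_smul_id X (A ∘ₗ φ)) (B v))
  rw [this, map_smul, trace_smulRight]
  rfl

end FDRep

namespace GelfandPairData

variable {G : Type} [Group G] [Fintype G] (D : GelfandPairData G)

noncomputable def rep (i : Fin (D.s + 1)) : FDRep ℂ G := (D.irr i).choose

instance simple_rep (i : Fin (D.s + 1)) : Simple (D.rep i) := (D.irr i).choose_spec.1

theorem χ_eq_character (i : Fin (D.s + 1)) : D.χ i = (D.rep i).character :=
  (D.irr i).choose_spec.2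

theorem finsum_mem_K {M : Type*} [AddCommMonoid M] (f : G → M) :
    ∑ᶠ k ∈ (D.K : Set G), f k = ∑ k : D.K, f k := by
  rw [← finsum_set_coe_eq_finsum_mem, finsum_eq_sum_of_fintype]
  rfl

noncomputable def proj (i : Fin (D.s + 1)) : Module.End ℂ (D.rep i) :=
  (Nat.card D.K : ℂ)⁻¹ • ∑ k : D.K, (D.rep i).ρ k

variable {D} in
theorem proj_mul_of_forall_rho_mul {i : Fin (D.s + 1)} {X : Module.End ℂ (D.rep i)}
    (h : ∀ k ∈ D.K, (D.rep i).ρ k * X = X) : D.proj i * X = X := by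
  rw [proj, smul_mul_assoc, Finset.sum_mul, Finset.sum_congr rfl fun k _ => h k.1 k.2,
    Finset.sum_const, Finset.card_univ, ← Nat.card_eq_fintype_card, ← Nat.cast_smul_eq_nsmul ℂ,
    smul_smul, inv_mul_cancel₀ (by exact_mod_cast Nat.card_pos.ne'), one_smul]

variable {D} in
theorem mul_proj_of_forall_mul_rho {i : Fin (D.s + 1)} {X : Module.End ℂ (D.rep i)}
    (h : ∀ k ∈ D.K, X * (D.rep i).ρ k = X) : X * D.proj i = X := by
  rw [proj, mul_smul_comm, Finset.mul_sum, Finset.sum_congr rfl fun k _ => h k.1 k.2,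
    Finset.sum_const, Finset.card_univ, ← Nat.card_eq_fintype_card, ← Nat.cast_smul_eq_nsmul ℂ,
    smul_smul, inv_mul_cancel₀ (by exact_mod_cast Nat.card_pos.ne'), one_smul]

theorem rho_mul_proj (i : Fin (D.s + 1)) {k : G} (hk : k ∈ D.K) :
    (D.rep i).ρ k * D.proj i = D.proj i := by
  rw [proj, mul_smul_comm, Finset.mul_sum]
  congr 1
  simp_rw [← map_mul]
  exact Fintype.sum_equiv (Equiv.mulLeft (⟨k, hk⟩ : D.K)) _ _ fun _ => rfl

theorem proj_mul_rho (i : Fin (D.s + 1)) {k : G} (hk : k ∈ D.K) :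
    D.proj i * (D.rep i).ρ k = D.proj i := by
  rw [proj, smul_mul_assoc, Finset.sum_mul]
  congr 1
  simp_rw [← map_mul]
  exact Fintype.sum_equiv (Equiv.mulRight (⟨k, hk⟩ : D.K)) _ _ fun _ => rfl

theorem isIdempotentElem_proj (i : Fin (D.s + 1)) : IsIdempotentElem (D.proj i) :=
  proj_mul_of_forall_rho_mul fun _ hk => D.rho_mul_proj i hk

theorem trace_proj (i : Fin (D.s + 1)) : trace ℂ (D.rep i) (D.proj i) = 1 := by
  rw [← D.mult_one i, D.finsum_mem_K, proj, map_smul, map_sum, D.χ_eq_character, smul_eq_mul]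
  rfl

/-- The spherical function `ω_i` with its argument inverted, see `ω_eq_sph_inv`. -/
noncomputable def sph (i : Fin (D.s + 1)) (x : G) : ℂ :=
  trace ℂ (D.rep i) ((D.rep i).ρ x * D.proj i)

theorem sph_mul_mul (i : Fin (D.s + 1)) {k₁ k₂ : G} (h₁ : k₁ ∈ D.K) (h₂ : k₂ ∈ D.K) (x : G) :
    D.sph i (k₁ * x * k₂) = D.sph i x := by
  rw [sph, sph, map_mul (D.rep i).ρ, map_mul (D.rep i).ρ, mul_assoc, D.rho_mul_proj i h₂,
    trace_mul_comm, ← mul_assoc, D.proj_mul_rho i h₁, trace_mul_comm]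

theorem sph_eq_sum (i : Fin (D.s + 1)) (x : G) :
    D.sph i x = (Nat.card D.K : ℂ)⁻¹ * ∑ k : D.K, D.χ i (x * k) := by
  rw [sph, proj, mul_smul_comm, Finset.mul_sum, map_smul, map_sum, smul_eq_mul, D.χ_eq_character]
  simp_rw [← map_mul]
  rfl

theorem ω_eq_sph_inv (i : Fin (D.s + 1)) (x : G) : D.ω i x = D.sph i x⁻¹ := by
  rw [ω, D.finsum_mem_K, sph_eq_sum]

theorem conj_sph (i : Fin (D.s + 1)) (x : G) : conj (D.sph i x) = D.sph i x⁻¹ := by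
  rw [sph_eq_sum, sph_eq_sum, map_mul, map_inv₀, map_natCast, map_sum]
  congr 1
  refine Fintype.sum_equiv (Equiv.inv D.K) _ _ fun k => ?_
  rw [D.χ_eq_character, ← FDRep.char_inv, mul_inv_rev, FDRep.char_mul_comm]
  rfl

noncomputable def dcIndex (x : G) : Fin (D.s + 1) := (D.coset_cover x).choose

theorem mem_DC_iff_dcIndex_eq {x : G} {t : Fin (D.s + 1)} : x ∈ D.DC t ↔ D.dcIndex x = t := by
  have hx : x ∈ D.DC (D.dcIndex x) := (D.coset_cover x).choose_spec
  refine ⟨fun h => by_contra fun hne => ?_, fun h => h ▸ hx⟩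
  exact Set.disjoint_left.mp (D.coset_disjoint _ _ hne) hx h

theorem g_mem_DC (t : Fin (D.s + 1)) : D.g t ∈ D.DC t :=
  ⟨1, D.K.one_mem, 1, D.K.one_mem, by group⟩

theorem mul_mem_DC_iff {k : G} (hk : k ∈ D.K) {y : G} {t : Fin (D.s + 1)} :
    k * y ∈ D.DC t ↔ y ∈ D.DC t := by
  have key : ∀ k ∈ D.K, ∀ y ∈ D.DC t, k * y ∈ D.DC t := by
    rintro k hk _ ⟨k₁, h₁, k₂, h₂, rfl⟩
    exact ⟨k * k₁, D.K.mul_mem hk h₁, k₂, h₂, by group⟩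
  exact ⟨fun h => by simpa using key _ (D.K.inv_mem hk) _ h, key k hk y⟩

theorem mem_DC_mul_iff {k : G} (hk : k ∈ D.K) {y : G} {t : Fin (D.s + 1)} :
    y * k ∈ D.DC t ↔ y ∈ D.DC t := by
  have key : ∀ k ∈ D.K, ∀ y ∈ D.DC t, y * k ∈ D.DC t := by
    rintro k hk _ ⟨k₁, h₁, k₂, h₂, rfl⟩
    exact ⟨k₁, h₁, k₂ * k, D.K.mul_mem h₂ hk, by group⟩
  exact ⟨fun h => by simpa using key _ (D.K.inv_mem hk) _ h, key k hk y⟩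

theorem sph_eq_of_mem_DC (i : Fin (D.s + 1)) {x : G} {t : Fin (D.s + 1)} (hx : x ∈ D.DC t) :
    D.sph i x = D.sph i (D.g t) := by
  obtain ⟨k₁, h₁, k₂, h₂, rfl⟩ := hx
  exact D.sph_mul_mul i h₁ h₂ _

theorem sph_inv_eq_of_mem_DC (i : Fin (D.s + 1)) {x : G} {t : Fin (D.s + 1)} (hx : x ∈ D.DC t) :
    D.sph i x⁻¹ = D.sph i (D.g t)⁻¹ := by
  obtain ⟨k₁, h₁, k₂, h₂, rfl⟩ := hx
  rw [show (k₁ * D.g t * k₂)⁻¹ = k₂⁻¹ * (D.g t)⁻¹ * k₁⁻¹ by group]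
  exact D.sph_mul_mul i (D.K.inv_mem h₂) (D.K.inv_mem h₁) _

theorem sum_eq_sum_ncard_DC_mul {f : G → ℂ} (hf : ∀ t, ∀ x ∈ D.DC t, f x = f (D.g t)) :
    ∑ x, f x = ∑ t, (D.DC t).ncard * f (D.g t) := by
  rw [Fintype.sum_congr _ _ fun x => hf _ x (D.mem_DC_iff_dcIndex_eq.mpr rfl),
    ← Fintype.sum_fiberwise' D.dcIndex fun t => f (D.g t)]
  refine Fintype.sum_congr _ _ fun t => ?_
  rw [Finset.sum_const, Finset.card_univ, nsmul_eq_mul, ← Nat.card_coe_set_eq,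
    Nat.card_eq_fintype_card,
    Fintype.card_congr (Equiv.subtypeEquivRight fun x => D.mem_DC_iff_dcIndex_eq.symm)]

theorem d_eq_finrank (i : Fin (D.s + 1)) : (D.d i : ℂ) = finrank ℂ (D.rep i) := by
  rw [← D.dim_eq, D.χ_eq_character, FDRep.char_one]

theorem sum_sph_mul_sph_inv (i j : Fin (D.s + 1)) :
    ∑ x, D.sph i x * D.sph j x⁻¹ = if i = j then (Fintype.card G : ℂ) / D.d i else 0 := by
  split_ifs with hij
  · subst hij
    have := FDRep.sum_trace_rho_mul_mul_trace_rho_inv_mul_self (D.rep i) (D.proj i) (D.proj i)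
    rwa [(D.isIdempotentElem_proj i).eq, D.trace_proj, mul_one, ← D.d_eq_finrank] at this
  · refine FDRep.sum_trace_rho_mul_mul_trace_rho_inv_mul_eq_zero _ _ ?_ _ _
    rintro ⟨e⟩
    exact hij (D.inj (by rw [D.χ_eq_character, D.χ_eq_character, FDRep.char_iso e]))

theorem sum_ncard_DC_mul_sph_mul_sph_inv (i j : Fin (D.s + 1)) :
    ∑ t, (D.DC t).ncard * (D.sph i (D.g t) * D.sph j (D.g t)⁻¹) =
      if i = j then (Fintype.card G : ℂ) / D.d i else 0 := by
  rw [← sum_sph_mul_sph_inv, D.sum_eq_sum_ncard_DC_mul fun t x hx => by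
    rw [D.sph_eq_of_mem_DC i hx, D.sph_inv_eq_of_mem_DC j hx]]

/- There are as many spherical functions as double cosets, so the orthogonality relations
`sum_ncard_DC_mul_sph_mul_sph_inv` exhibit a left inverse of a square matrix; it is also a right
inverse, which is the dual relation below. -/
theorem ncard_DC_mul_sum_sph_inv_mul_sph (t r : Fin (D.s + 1)) :
    (D.DC t).ncard * ∑ i, D.d i / Fintype.card G * D.sph i (D.g t)⁻¹ * D.sph i (D.g r) =
      if t = r then 1 else 0 := by
  have hG : (Fintype.card G : ℂ) ≠ 0 := by exact_mod_cast Fintype.card_ne_zero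
  have hd : ∀ i, (D.d i : ℂ) ≠ 0 := fun i => by
    rw [D.d_eq_finrank]; exact_mod_cast (FDRep.finrank_pos_of_simple _).ne'
  have hrow : ∀ i j, ∑ t, D.d i / Fintype.card G * D.sph i (D.g t) *
      ((D.DC t).ncard * D.sph j (D.g t)⁻¹) = if i = j then 1 else 0 := fun i j => by
    have : (if i = j then 1 else 0 : ℂ) =
        D.d i / Fintype.card G * if i = j then (Fintype.card G : ℂ) / D.d i else 0 := by
      split_ifs
      · rw [div_mul_div_comm, mul_comm, div_self (mul_ne_zero hG (hd i))]
      · rw [mul_zero]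
    rw [this, ← sum_ncard_DC_mul_sph_mul_sph_inv, Finset.mul_sum]
    exact Finset.sum_congr rfl fun t _ => by ring
  rw [← sum_mul_eq_ite_of_sum_mul_eq_ite hrow t r, Finset.mul_sum]
  exact Finset.sum_congr rfl fun i _ => by ring

theorem ite_mem_DC_eq (r : Fin (D.s + 1)) (y : G) :
    (if y ∈ D.DC r then 1 else 0 : ℂ) =
      (D.DC r).ncard * ∑ i, D.d i / Fintype.card G * D.sph i (D.g r)⁻¹ * D.sph i y := by
  have hy : ∀ i, D.sph i y = D.sph i (D.g (D.dcIndex y)) := fun i =>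
    D.sph_eq_of_mem_DC i (D.mem_DC_iff_dcIndex_eq.mpr rfl)
  simp_rw [hy]
  rw [ncard_DC_mul_sum_sph_inv_mul_sph]
  exact if_congr (D.mem_DC_iff_dcIndex_eq.trans eq_comm) rfl rfl

theorem sum_rho_DC (i u : Fin (D.s + 1)) :
    ∑ y : D.DC u, (D.rep i).ρ y = ((D.DC u).ncard * D.sph i (D.g u)) • D.proj i := by
  set S := ∑ y : D.DC u, (D.rep i).ρ y
  have hl : D.proj i * S = S := proj_mul_of_forall_rho_mul fun k hk => by
    simp_rw [S, Finset.mul_sum, ← map_mul]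
    exact Fintype.sum_equiv ((Equiv.mulLeft k).subtypeEquiv fun y => (D.mul_mem_DC_iff hk).symm)
      _ _ fun _ => rfl
  have hr : S * D.proj i = S := mul_proj_of_forall_mul_rho fun k hk => by
    simp_rw [S, Finset.sum_mul, ← map_mul]
    exact Fintype.sum_equiv ((Equiv.mulRight k).subtypeEquiv fun y => (D.mem_DC_mul_iff hk).symm)
      _ _ fun _ => rfl
  have htrace : trace ℂ (D.rep i) (S * D.proj i) = (D.DC u).ncard * D.sph i (D.g u) :=
    calc _ = ∑ y : D.DC u, D.sph i y := by rw [Finset.sum_mul, map_sum]; rfl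
      _ = ∑ _y : D.DC u, D.sph i (D.g u) :=
        Fintype.sum_congr _ _ fun y => D.sph_eq_of_mem_DC i y.2
      _ = _ := by
        rw [Finset.sum_const, Finset.card_univ, nsmul_eq_mul, ← Nat.card_eq_fintype_card,
          Nat.card_coe_set_eq]
  rw [← htrace, ← (D.isIdempotentElem_proj i).mul_mul_eq_trace_smul (D.trace_proj i), hl, hr]

theorem sum_sph_list_prod (i u : Fin (D.s + 1)) (m : ℕ) :
    ∑ x : Fin m → D.DC u, D.sph i (List.ofFn fun j => (x j : G)).prod =
      ((D.DC u).ncard * D.sph i (D.g u)) ^ m := by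
  calc _ = trace ℂ (D.rep i) ((∑ x : Fin m → D.DC u,
        (List.ofFn fun j => (D.rep i).ρ (x j)).prod) * D.proj i) := by
        simp [sph, Finset.sum_mul, map_list_prod, List.map_ofFn, Function.comp_def]
    _ = _ := by
      rw [sum_list_prod_ofFn fun y : D.DC u => (D.rep i).ρ y, sum_rho_DC, smul_pow, smul_mul_assoc,
        ← pow_succ, (D.isIdempotentElem_proj i).pow_succ_eq, map_smul, trace_proj, smul_eq_mul,
        mul_one]

theorem ncard_setOf_list_prod_mem_DC (u r : Fin (D.s + 1)) (m : ℕ) :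
    ({x : Fin m → G | (∀ j, x j ∈ D.DC u) ∧ (List.ofFn x).prod ∈ D.DC r}.ncard : ℂ) =
      (D.DC r).ncard * ∑ i, D.d i / Fintype.card G * D.sph i (D.g r)⁻¹ *
        ((D.DC u).ncard * D.sph i (D.g u)) ^ m := by
  have hcount : ({x : Fin m → G | (∀ j, x j ∈ D.DC u) ∧ (List.ofFn x).prod ∈ D.DC r}.ncard : ℂ) =
      ∑ x : Fin m → D.DC u, if (List.ofFn fun j => (x j : G)).prod ∈ D.DC r then 1 else 0 := by
    have e : {x : Fin m → G | (∀ j, x j ∈ D.DC u) ∧ (List.ofFn x).prod ∈ D.DC r} ≃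
        {x : Fin m → D.DC u // (List.ofFn fun j => (x j : G)).prod ∈ D.DC r} :=
      (Equiv.subtypeSubtypeEquivSubtypeInter (fun x : Fin m → G => ∀ j, x j ∈ D.DC u)
        (fun x => (List.ofFn x).prod ∈ D.DC r)).symm.trans
        (Equiv.subtypeEquiv (Equiv.subtypePiEquivPi (p := fun _ y => y ∈ D.DC u)) fun _ => Iff.rfl)
    rw [← Nat.card_coe_set_eq, Nat.card_congr e, Nat.card_eq_fintype_card, Fintype.card_subtype,
      Finset.natCast_card_filter]
  simp_rw [hcount, ite_mem_DC_eq, ← Finset.mul_sum]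
  rw [Finset.sum_comm]
  simp_rw [← Finset.mul_sum, sum_sph_list_prod]

end GelfandPairData

theorem stmt12_general {G : Type} [Group G] [Fintype G] (D : GelfandPairData G)
    (u r : Fin (D.s + 1)) (m : ℕ) :
    (((Set.ncard {x : Fin m → G | (∀ j, x j ∈ D.DC u) ∧ (List.ofFn x).prod ∈ D.DC r} : ℝ) /
        (Set.ncard (D.DC u) : ℝ) ^ m : ℝ) : ℂ) =
      (Set.ncard (D.DC r) : ℂ) *
        ∑ i : Fin (D.s + 1), ((D.d i : ℂ) / (Fintype.card G : ℂ)) *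
          (D.ω i (D.g u)) ^ m * (starRingEnd ℂ) (D.ω i (D.g r)) := by
  have hu : ((D.DC u).ncard : ℂ) ≠ 0 := by
    exact_mod_cast (Set.ncard_pos (Set.toFinite _)).mpr ⟨_, D.g_mem_DC u⟩ |>.ne'
  rw [← Complex.conj_ofReal]
  push_cast
  rw [D.ncard_setOf_list_prod_mem_DC, mul_div_assoc, Finset.sum_div]
  simp only [map_mul, map_sum, map_natCast, map_div₀, map_pow, D.conj_sph, inv_inv,
    D.ω_eq_sph_inv]
  refine congrArg _ (Finset.sum_congr rfl fun i _ => ?_)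
  field_simp
  ring

/-- **Lemma (fourier)**: for the `K`-biinvariant probability concentrated on the double coset
`K_u`, the `m`-step distribution is `p_m(K_r) = |K_r| Σ_i (d_i/|G|) ω_i(g_u)^m conj(ω_i(g_r))`,
where `p_m(K_r)` is the probability that a product of `m` independent uniform elements of
`K_u` lies in `K_r`. -/
theorem stmt12 {G : Type} [Group G] [Fintype G] (D : GelfandPairData G)
    (u r : Fin (D.s + 1)) (m : ℕ) (hm : 1 ≤ m) :
    (((Set.ncard {x : Fin m → G | (∀ j, x j ∈ D.DC u) ∧ (List.ofFn x).prod ∈ D.DC r} : ℝ) /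
        (Set.ncard (D.DC u) : ℝ) ^ m : ℝ) : ℂ) =
      (Set.ncard (D.DC r) : ℂ) *
        ∑ i : Fin (D.s + 1), ((D.d i : ℂ) / (Fintype.card G : ℂ)) *
          (D.ω i (D.g u)) ^ m * (starRingEnd ℂ) (D.ω i (D.g r)) :=
  stmt12_general D u r m
end

section
/- Let n ≥ 1 and for 0 ≤ i, r ≤ n define the rational number ω_i(r) = (1/binom(n,i)) Σ_{m=0}^{i} (−1)^m binom(r,m) binom(n−r, i−m) (the normalized Krawtchouk polynomial; these are the spherical functions of the hypercube Gelfand pair). Define, for 0 ≤ i, j ≤ n, L_1(i,j) = (binom(n,j)/2^n) · Σ_{r=0}^{n} binom(n,r) ω_i(r) ω_1(r) ω_j(r). Then L_1 is a birth-death chain: L_1(i,j) = i/n if j = i−1, L_1(i,j) = 1 − i/n if j = i+1, and L_1(i,j) = 0 for all other j (in particular L_1(i,i) = 0). Equivalently, for all 0 ≤ r ≤ n and 1 ≤ i ≤ n−1 one has ω_1(r) ω_i(r) = (1 − i/n) ω_{i+1}(r) + (i/n) ω_{i−1}(r). -/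
open scoped BigOperators

/-- The normalized Krawtchouk polynomial: the spherical function of the hypercube Gelfand
pair, `ω_i(g_r) = (1/binom(n,i)) Σ_{m=0}^{i} (−1)^m binom(r,m) binom(n−r, i−m)`. -/
def krw (n i r : ℕ) : ℚ :=
  (1 / (n.choose i : ℚ)) *
    ∑ m ∈ Finset.range (i + 1), (-1 : ℚ) ^ m * (r.choose m) * ((n - r).choose (i - m))

/-- The Markov chain `L_1` on spherical functions of the hypercube:
`L_1(i,j) = (binom(n,j)/2^n) Σ_{r=0}^{n} binom(n,r) ω_i(r) ω_1(r) ω_j(r)`. -/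
def L1 (n i j : ℕ) : ℚ :=
  ((n.choose j : ℚ) / 2 ^ n) *
    ∑ r ∈ Finset.range (n + 1), (n.choose r : ℚ) * krw n i r * krw n 1 r * krw n j r

open Polynomial Finset

noncomputable def Kr (n i r : ℕ) : ℚ :=
  ∑ m ∈ Finset.range (i + 1), (-1 : ℚ) ^ m * (r.choose m) * ((n - r).choose (i - m))

noncomputable def Pg (n r : ℕ) : Polynomial ℚ := (1 - X) ^ r * (1 + X) ^ (n - r)


lemma coeff_one_sub_X_pow (r m : ℕ) :
    (((1 - X : ℚ[X]) ^ r)).coeff m = (-1 : ℚ) ^ m * r.choose m := by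
  have h : (1 - X : ℚ[X]) ^ r = ∑ k ∈ range (r + 1), C ((-1 : ℚ) ^ k * r.choose k) * X ^ k := by
    have := add_pow (-X : ℚ[X]) 1 r
    rw [neg_add_eq_sub] at this
    rw [this]
    refine Finset.sum_congr rfl fun k hk => ?_
    rw [one_pow, neg_pow]
    simp only [map_mul, map_pow, map_neg, map_one, map_natCast]
    ring
  rw [h, finset_sum_coeff]
  simp only [coeff_C_mul, coeff_X_pow]
  rw [Finset.sum_eq_single m]
  · simp
  · intro b _ hb; simp [hb.symm]
  · intro hm
    simp only [mem_range, not_lt] at hm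
    simp [Nat.choose_eq_zero_of_lt (by omega : r < m)]

lemma coeff_Pg (n r i : ℕ) : (Pg n r).coeff i = Kr n i r := by
  rw [Pg, Polynomial.coeff_mul, Finset.Nat.sum_antidiagonal_eq_sum_range_succ_mk, Kr]
  refine Finset.sum_congr rfl fun m _ => ?_
  rw [coeff_one_sub_X_pow, coeff_one_add_X_pow]

lemma hu_lem (r : ℕ) : (1 - X : ℚ[X]) * derivative ((1 - X : ℚ[X]) ^ r)
    = -(r : ℚ[X]) * (1 - X) ^ r := by
  cases r with
  | zero => simp
  | succ s =>
    rw [derivative_pow_succ]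
    have h1 : derivative (1 - X : ℚ[X]) = -1 := by simp
    rw [h1, C_add, C_1, C_eq_natCast]
    push_cast
    ring_nf

lemma hv_lem (a : ℕ) : (1 + X : ℚ[X]) * derivative ((1 + X : ℚ[X]) ^ a)
    = (a : ℚ[X]) * (1 + X) ^ a := by
  cases a with
  | zero => simp
  | succ s =>
    rw [derivative_pow_succ]
    have h1 : derivative (1 + X : ℚ[X]) = 1 := by simp
    rw [h1, C_add, C_1, C_eq_natCast]
    push_cast
    ring_nf

lemma poly_id (n r : ℕ) (h : r ≤ n) :
    derivative (Pg n r) - derivative (Pg n r) * X ^ 2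
      = ((n : ℚ[X]) - 2 * (r : ℚ[X])) * Pg n r - (n : ℚ[X]) * (X * Pg n r) := by
  have hu := hu_lem r
  have hv := hv_lem (n - r)
  have hc : ((n - r : ℕ) : ℚ[X]) = (n : ℚ[X]) - (r : ℚ[X]) := by
    push_cast [h]; ring
  rw [hc] at hv
  have hd : derivative (Pg n r)
      = derivative ((1 - X : ℚ[X]) ^ r) * (1 + X) ^ (n - r)
        + (1 - X) ^ r * derivative ((1 + X : ℚ[X]) ^ (n - r)) := by
    rw [Pg, derivative_mul]
  rw [hd, Pg]
  linear_combination ((1 + X : ℚ[X]) * (1 + X) ^ (n - r)) * hu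
    + ((1 - X : ℚ[X]) * (1 - X) ^ r) * hv

lemma Kr_rec (n r j : ℕ) (hr : r ≤ n) (hj : 1 ≤ j) :
    ((j : ℚ) + 1) * Kr n (j + 1) r
      = ((n : ℚ) - 2 * r) * Kr n j r - ((n : ℚ) - j + 1) * Kr n (j - 1) r := by
  obtain ⟨k, rfl⟩ : ∃ k, j = k + 1 := ⟨j - 1, by omega⟩
  have H := congrArg (fun p : ℚ[X] => p.coeff (k + 1)) (poly_id n r hr)
  simp only [coeff_sub, coeff_add, coeff_mul_X_pow', sub_mul, two_mul, add_mul,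
    coeff_natCast_mul, coeff_derivative, coeff_Pg, coeff_X_mul] at H
  rcases Nat.eq_zero_or_pos k with rfl | hk
  · norm_num [coeff_Pg] at H
    push_cast
    linarith [H]
  · obtain ⟨s, rfl⟩ : ∃ s, k = s + 1 := ⟨k - 1, by omega⟩
    have h3 : (s + 1 + 1 - 1 : ℕ) = s + 1 := by omega
    rw [h3]
    push_cast at H ⊢
    linarith [H]

lemma Kr_zero (n r : ℕ) : Kr n 0 r = 1 := by simp [Kr]

lemma Kr_one (n r : ℕ) (h : r ≤ n) : Kr n 1 r = (n : ℚ) - 2 * r := by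
  rw [Kr]
  rw [Finset.sum_range_succ, Finset.sum_range_succ, Finset.sum_range_zero]
  simp [Nat.choose_one_right]
  have : ((n - r : ℕ) : ℚ) = (n : ℚ) - r := by push_cast [h]; ring
  rw [this]; ring

lemma Kr_vanish (n r i : ℕ) (hr : r ≤ n) (hi : n < i) : Kr n i r = 0 := by
  rw [← coeff_Pg]
  apply coeff_eq_zero_of_natDegree_lt
  calc (Pg n r).natDegree ≤ ((1 - X : ℚ[X]) ^ r).natDegree + ((1 + X : ℚ[X]) ^ (n - r)).natDegree :=
        natDegree_mul_le
    _ ≤ r * (1 - X : ℚ[X]).natDegree + (n - r) * (1 + X : ℚ[X]).natDegree := by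
        exact add_le_add (natDegree_pow_le) (natDegree_pow_le)
    _ ≤ r * 1 + (n - r) * 1 := by
        refine add_le_add (Nat.mul_le_mul_left _ ?_) (Nat.mul_le_mul_left _ ?_)
        · exact le_trans (natDegree_sub_le _ _) (by simp)
        · exact le_trans (natDegree_add_le _ _) (by simp)
    _ ≤ n := by omega
    _ < i := hi

lemma sumKr (n j : ℕ) :
    ∑ r ∈ Finset.range (n + 1), (n.choose r : ℚ) * Kr n j r
      = if j = 0 then (2 : ℚ) ^ n else 0 := by
  have hpoly : ∑ r ∈ Finset.range (n + 1), Pg n r * ((n.choose r : ℕ) : ℚ[X])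
      = (2 : ℚ[X]) ^ n := by
    have h := add_pow (1 - X : ℚ[X]) (1 + X) n
    have h2 : ((1 - X) + (1 + X) : ℚ[X]) = 2 := by ring
    rw [h2] at h
    unfold Pg
    rw [← h]
  have H := congrArg (fun p : ℚ[X] => p.coeff j) hpoly
  simp only [finset_sum_coeff] at H
  have h2C : (2 : ℚ[X]) = C (2 : ℚ) := by rw [map_ofNat]
  rw [h2C, ← C_pow, coeff_C] at H
  rw [← H]
  refine Finset.sum_congr rfl fun r _ => ?_
  rw [mul_comm (Pg n r), coeff_natCast_mul, coeff_Pg]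

lemma krw_eq (n i r : ℕ) : krw n i r = (1 / (n.choose i : ℚ)) * Kr n i r := rfl

lemma krw_zero (n r : ℕ) : krw n 0 r = 1 := by
  rw [krw_eq, Kr_zero]; simp

lemma krw_of_gt (n i r : ℕ) (h : n < i) : krw n i r = 0 := by
  rw [krw_eq, Nat.choose_eq_zero_of_lt h]; simp

lemma choose_id1 (n i : ℕ) (h : i < n) :
    (n.choose (i + 1) : ℚ) * (i + 1) = (n.choose i : ℚ) * ((n : ℚ) - i) := by
  have h2 := Nat.choose_succ_right_eq n i
  have hc : ((n - i : ℕ) : ℚ) = (n : ℚ) - i := by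
    rw [Nat.cast_sub (le_of_lt h)]
  calc (n.choose (i + 1) : ℚ) * (i + 1) = ((n.choose (i + 1) * (i + 1) : ℕ) : ℚ) := by
        push_cast; ring
    _ = ((n.choose i * (n - i) : ℕ) : ℚ) := by rw [h2]
    _ = (n.choose i : ℚ) * ((n : ℚ) - i) := by rw [Nat.cast_mul, hc]

lemma choose_id2 (n i : ℕ) (h1 : 1 ≤ i) (h2 : i ≤ n) :
    (n.choose i : ℚ) * i = (n.choose (i - 1) : ℚ) * ((n : ℚ) - i + 1) := by
  obtain ⟨k, rfl⟩ : ∃ k, i = k + 1 := ⟨i - 1, by omega⟩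
  have h3 := Nat.choose_succ_right_eq n k
  have hc : ((n - k : ℕ) : ℚ) = (n : ℚ) - k := by
    rw [Nat.cast_sub (by omega)]
  have h4 : ((n.choose (k + 1) * (k + 1) : ℕ) : ℚ) = ((n.choose k * (n - k) : ℕ) : ℚ) := by
    rw [h3]
  push_cast [hc] at h4 ⊢
  linear_combination h4

lemma rec_full (n : ℕ) (hn : 1 ≤ n) (r i : ℕ) (hr : r ≤ n) (hi : i ≤ n) :
    krw n 1 r * krw n i r =
      (1 - (i : ℚ) / n) * krw n (i + 1) r + ((i : ℚ) / n) * krw n (i - 1) r := by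
  have hn0 : (n : ℚ) ≠ 0 := Nat.cast_ne_zero.2 (by omega)
  have hkrw1 : krw n 1 r = ((n : ℚ) - 2 * r) / n := by
    rw [krw_eq, Kr_one n r hr, Nat.choose_one_right]; ring
  rcases Nat.eq_zero_or_pos i with rfl | hi1
  · rw [krw_zero]; norm_num
  have key := Kr_rec n r i hr hi1
  rcases eq_or_lt_of_le hi with heq | hilt
  · -- i = n
    subst heq
    have hv : Kr i (i + 1) r = 0 := Kr_vanish i r (i + 1) hr (by omega)
    rw [hv] at key
    have hn1 : i.choose (i - 1) = i := by
      have h5 := Nat.choose_symm (n := i) (k := 1) hi1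
      rw [Nat.choose_one_right] at h5
      exact h5
    rw [hkrw1, krw_eq, krw_eq, krw_eq, Nat.choose_self, hn1, hv]
    push_cast
    field_simp
    linear_combination -key
  · -- i < n
    have hc1 := choose_id1 n i hilt
    have hc2 := choose_id2 n i hi1 hi
    have hne_i : (n.choose i : ℚ) ≠ 0 := Nat.cast_ne_zero.2 (Nat.choose_pos hi).ne'
    have hne_i1 : (n.choose (i + 1) : ℚ) ≠ 0 := Nat.cast_ne_zero.2 (Nat.choose_pos hilt).ne'
    have hne_im : (n.choose (i - 1) : ℚ) ≠ 0 :=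
      Nat.cast_ne_zero.2 (Nat.choose_pos (by omega)).ne'
    have eKi : Kr n i r = (n.choose i : ℚ) * krw n i r := by
      rw [krw_eq]; field_simp
    have eKp : Kr n (i + 1) r = (n.choose (i + 1) : ℚ) * krw n (i + 1) r := by
      rw [krw_eq]; field_simp
    have eKm : Kr n (i - 1) r = (n.choose (i - 1) : ℚ) * krw n (i - 1) r := by
      rw [krw_eq]; field_simp
    rw [eKi, eKp, eKm] at key
    have goal' : ((n : ℚ) - 2 * r) * krw n i r
        = ((n : ℚ) - i) * krw n (i + 1) r + (i : ℚ) * krw n (i - 1) r := by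
      have h6 : (n.choose i : ℚ) * (((n : ℚ) - 2 * r) * krw n i r)
          = (n.choose i : ℚ) * (((n : ℚ) - i) * krw n (i + 1) r + (i : ℚ) * krw n (i - 1) r) := by
        linear_combination (-1 : ℚ) * key + krw n (i + 1) r * hc1 - krw n (i - 1) r * hc2
      exact mul_left_cancel₀ hne_i h6
    have hdiv : (n : ℚ) / n = 1 := div_self hn0
    rw [hkrw1]
    linear_combination (1 / (n : ℚ)) * goal' + krw n (i + 1) r * hdiv

noncomputable def S (n i j : ℕ) : ℚ :=
  ∑ r ∈ Finset.range (n + 1), (n.choose r : ℚ) * (krw n i r * krw n j r)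

lemma S_of_gt (n i j : ℕ) (h : n < j) : S n i j = 0 := by
  rw [S]
  refine Finset.sum_eq_zero fun r _ => ?_
  rw [krw_of_gt n j r h]; ring

lemma S_base (n j : ℕ) : S n 0 j = if 0 = j then (2 : ℚ) ^ n / (n.choose 0 : ℚ) else 0 := by
  have h : S n 0 j = (1 / (n.choose j : ℚ)) *
      ∑ r ∈ Finset.range (n + 1), (n.choose r : ℚ) * Kr n j r := by
    rw [S, Finset.mul_sum]
    refine Finset.sum_congr rfl fun r _ => ?_
    rw [krw_zero, krw_eq]; ring
  rw [h, sumKr]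
  rcases eq_or_ne j 0 with rfl | hj
  · simp
  · simp [hj, Ne.symm hj]

lemma orth (n : ℕ) (hn : 1 ≤ n) :
    ∀ i, i ≤ n → ∀ j, S n i j = if i = j then (2 : ℚ) ^ n / (n.choose i : ℚ) else 0 := by
  have hn0 : (n : ℚ) ≠ 0 := Nat.cast_ne_zero.2 (by omega)
  intro i
  induction i using Nat.strong_induction_on with
  | _ i IH =>
    intro hi j
    rcases i with _ | k
    · exact S_base n j
    · -- i = k + 1
      by_cases hj : j ≤ n
      swap
      · rw [S_of_gt n _ j (by omega), if_neg (by omega)]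
      have hk : k ≤ n := by omega
      have E : (1 - (k : ℚ) / n) * S n (k + 1) j + ((k : ℚ) / n) * S n (k - 1) j
          = (1 - (j : ℚ) / n) * S n k (j + 1) + ((j : ℚ) / n) * S n k (j - 1) := by
        simp only [S, Finset.mul_sum, ← Finset.sum_add_distrib]
        refine Finset.sum_congr rfl fun r hr => ?_
        have hrn : r ≤ n := by simp only [Finset.mem_range] at hr; omega
        have h1 := rec_full n hn r k hrn hk
        have h2 := rec_full n hn r j hrn hj
        linear_combination ((n.choose r : ℚ) * krw n k r) * h2
          - ((n.choose r : ℚ) * krw n j r) * h1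
      rw [IH k (by omega) hk (j + 1), IH k (by omega) hk (j - 1),
        IH (k - 1) (by omega) (by omega) j] at E
      have hak : (1 - (k : ℚ) / n) ≠ 0 := by
        have hkn : (k : ℚ) < n := by exact_mod_cast (by omega : k < n)
        intro hcon
        have h9 : (k : ℚ) / n = 1 := by linarith
        rw [div_eq_one_iff_eq hn0] at h9
        exact absurd h9 (by exact_mod_cast (by omega : (k : ℕ) ≠ n))
      have hcne : (n.choose k : ℚ) ≠ 0 := Nat.cast_ne_zero.2 (Nat.choose_pos hk).ne'
      rcases eq_or_ne (k + 1) j with heq | hne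
      · -- j = k + 1
        subst heq
        have hcne1 : (n.choose (k + 1) : ℚ) ≠ 0 :=
          Nat.cast_ne_zero.2 (Nat.choose_pos hj).ne'
        have e1 : (if k = (k + 1) + 1 then (2 : ℚ) ^ n / (n.choose k : ℚ) else 0) = 0 :=
          if_neg (by omega)
        have e2 : (if k = (k + 1) - 1 then (2 : ℚ) ^ n / (n.choose k : ℚ) else 0)
            = (2 : ℚ) ^ n / (n.choose k : ℚ) := if_pos (by omega)
        have e3 : (if k - 1 = k + 1 then (2 : ℚ) ^ n / (n.choose (k - 1) : ℚ) else 0) = 0 :=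
          if_neg (by omega)
        have E' : (1 - (k : ℚ) / n) * S n (k + 1) (k + 1)
            = (((k + 1 : ℕ) : ℚ) / n) * ((2 : ℚ) ^ n / (n.choose k : ℚ)) := by
          linear_combination E + (1 - ((k + 1 : ℕ) : ℚ) / n) * e1
            + (((k + 1 : ℕ) : ℚ) / n) * e2 - ((k : ℚ) / n) * e3
        have hc1 := choose_id1 n k (by omega)
        have hEq : (((k + 1 : ℕ) : ℚ) / n) * ((2 : ℚ) ^ n / (n.choose k : ℚ))
            = (1 - (k : ℚ) / n) * ((2 : ℚ) ^ n / (n.choose (k + 1) : ℚ)) := by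
          have hsplit : (1 - (k : ℚ) / n) = ((n : ℚ) - k) / n := by field_simp
          rw [hsplit, div_mul_div_comm, div_mul_div_comm,
            div_eq_div_iff (mul_ne_zero hn0 hcne) (mul_ne_zero hn0 hcne1)]
          push_cast
          linear_combination (n : ℚ) * (2 : ℚ) ^ n * hc1
        rw [if_pos rfl]
        exact mul_left_cancel₀ hak (E'.trans hEq)
      · rw [if_neg hne]
        rcases eq_or_ne (j + 1) k with heq2 | hne2
        · -- j = k - 1
          have hk1 : 1 ≤ k := by omega
          have hc2 := choose_id2 n k hk1 hk
          have hcnem : (n.choose (k - 1) : ℚ) ≠ 0 :=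
            Nat.cast_ne_zero.2 (Nat.choose_pos (by omega)).ne'
          have e1 : (if k = j + 1 then (2 : ℚ) ^ n / (n.choose k : ℚ) else 0)
              = (2 : ℚ) ^ n / (n.choose k : ℚ) := if_pos (by omega)
          have e2 : (if k = j - 1 then (2 : ℚ) ^ n / (n.choose k : ℚ) else 0) = 0 :=
            if_neg (by omega)
          have e3 : (if k - 1 = j then (2 : ℚ) ^ n / (n.choose (k - 1) : ℚ) else 0)
              = (2 : ℚ) ^ n / (n.choose (k - 1) : ℚ) := if_pos (by omega)
          have hj' : (j : ℚ) = (k : ℚ) - 1 := by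
            have h8 : (j : ℕ) + 1 = k := heq2
            push_cast [← h8]; ring
          have hEq2 : (1 - ((k : ℚ) - 1) / n) * ((2 : ℚ) ^ n / (n.choose k : ℚ))
              = ((k : ℚ) / n) * ((2 : ℚ) ^ n / (n.choose (k - 1) : ℚ)) := by
            have hsplit : (1 - ((k : ℚ) - 1) / n) = ((n : ℚ) - k + 1) / n := by
              field_simp; ring
            rw [hsplit, div_mul_div_comm, div_mul_div_comm,
              div_eq_div_iff (mul_ne_zero hn0 hcne) (mul_ne_zero hn0 hcnem)]
            linear_combination (-(n : ℚ)) * (2 : ℚ) ^ n * hc2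
          have hz : (1 - (k : ℚ) / n) * S n (k + 1) j = 0 := by
            rw [hj'] at E
            linear_combination E + (1 - ((k : ℚ) - 1) / n) * e1 + (((k : ℚ) - 1) / n) * e2
              - ((k : ℚ) / n) * e3 + hEq2
          rcases mul_eq_zero.1 hz with h | h
          · exact absurd h hak
          · exact h
        · -- generic case
          have t1 : (1 - (j : ℚ) / n) *
              (if k = j + 1 then (2 : ℚ) ^ n / (n.choose k : ℚ) else 0) = 0 := by
            rw [if_neg (by omega)]; ring
          have t2 : ((j : ℚ) / n) *
              (if k = j - 1 then (2 : ℚ) ^ n / (n.choose k : ℚ) else 0) = 0 := by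
            rcases Nat.eq_zero_or_pos j with rfl | hj1
            · push_cast; ring
            · rw [if_neg (by omega)]; ring
          have t3 : ((k : ℚ) / n) *
              (if k - 1 = j then (2 : ℚ) ^ n / (n.choose (k - 1) : ℚ) else 0) = 0 := by
            rcases Nat.eq_zero_or_pos k with rfl | hk1
            · push_cast; ring
            · rw [if_neg (by omega)]; ring
          have hz : (1 - (k : ℚ) / n) * S n (k + 1) j = 0 := by
            linear_combination E + t1 + t2 - t3
          rcases mul_eq_zero.1 hz with h | h
          · exact absurd h hak
          · exact h

/-- **Lemma (birth)**: `L_1` is a birth-death chain: `L_1(i,j) = i/n` if `j = i − 1`,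
`L_1(i,j) = 1 − i/n` if `j = i + 1`, and `L_1(i,j) = 0` otherwise; equivalently, the
Krawtchouk three-term recurrence
`ω_1(r) ω_i(r) = (1 − i/n) ω_{i+1}(r) + (i/n) ω_{i−1}(r)` holds. -/
theorem stmt19 (n : ℕ) (hn : 1 ≤ n) :
    (∀ i j : ℕ, i ≤ n → j ≤ n →
      L1 n i j = (if j + 1 = i then (i : ℚ) / n else 0) +
        (if j = i + 1 then 1 - (i : ℚ) / n else 0)) ∧
    (∀ r i : ℕ, r ≤ n → 1 ≤ i → i ≤ n - 1 →
      krw n 1 r * krw n i r =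
        (1 - (i : ℚ) / n) * krw n (i + 1) r + ((i : ℚ) / n) * krw n (i - 1) r) := by
  have hn0 : (n : ℚ) ≠ 0 := Nat.cast_ne_zero.2 (by omega)
  constructor
  · intro i j hi hj
    have hsum : (∑ r ∈ Finset.range (n + 1),
          (n.choose r : ℚ) * krw n i r * krw n 1 r * krw n j r)
        = (1 - (i : ℚ) / n) * S n (i + 1) j + ((i : ℚ) / n) * S n (i - 1) j := by
      simp only [S, Finset.mul_sum, ← Finset.sum_add_distrib]
      refine Finset.sum_congr rfl fun r hr => ?_
      have hrn : r ≤ n := by simp only [Finset.mem_range] at hr; omega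
      have h1 := rec_full n hn r i hrn hi
      linear_combination ((n.choose r : ℚ) * krw n j r) * h1
    have hS2 := orth n hn (i - 1) (by omega) j
    have hS1 : (1 - (i : ℚ) / n) * S n (i + 1) j
        = (1 - (i : ℚ) / n) *
          (if i + 1 = j then (2 : ℚ) ^ n / (n.choose (i + 1) : ℚ) else 0) := by
      rcases lt_or_eq_of_le hi with hlt | heq
      · rw [orth n hn (i + 1) (by omega) j]
      · have hz : (1 - (i : ℚ) / n) = 0 := by
          rw [heq]; rw [div_self hn0]; ring
        rw [hz, zero_mul, zero_mul]
    rw [L1, hsum, mul_add, hS1, hS2]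
    have h2n : (2 : ℚ) ^ n ≠ 0 := by positivity
    rcases eq_or_ne j (i + 1) with rfl | hne1
    · rw [if_pos rfl, if_pos rfl, if_neg (by omega), if_neg (by omega)]
      have hc : (n.choose (i + 1) : ℚ) ≠ 0 := Nat.cast_ne_zero.2 (Nat.choose_pos hj).ne'
      field_simp
      ring
    · rcases eq_or_ne (j + 1) i with heq2 | hne2
      · have hij : i - 1 = j := by omega
        rw [if_neg (by omega), if_pos hij, if_pos heq2, if_neg hne1, ← hij]
        have hc : (n.choose (i - 1) : ℚ) ≠ 0 :=
          Nat.cast_ne_zero.2 (Nat.choose_pos (by omega)).ne'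
        field_simp
        ring
      · rw [if_neg (show ¬(i + 1 = j) by omega), if_neg hne2, if_neg hne1]
        rcases Nat.eq_zero_or_pos i with rfl | hi1
        · norm_num
        · rw [if_neg (show ¬(i - 1 = j) by omega)]
          ring
  · intro r i hr h1 h2
    exact rec_full n hn r i hr (by omega)
end
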